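/- For all α, β ∈ 𝒜ⁿ, every i ∈ {1,…,n} and every s ≥ 0, the following identity holds in 𝒜 (sums over k, l, m): α_k (∂/∂u^i_{(s)})(η^{kl} ∂_x β_l) + η^{lm}(∂_x α_m)(∂β_l/∂u^i_{(s)}) = ∂_x( α_k η^{kl} ∂β_l/∂u^i_{(s)} ) + α_k η^{kl} ∂β_l/∂u^i_{(s−1)}, where the last term is absent for s = 0. Consequently, in flat coordinates the bracket {α,β} := Lie_{Pβ}α − Lie_{Pα}β + δ⟨β, Pα⟩ is, as a 1-form on the formal loop space (i.e., modulo the image of d), the reduced 1-form with components {α,β}_i = Σ_{k,l,s} η^{kl}[ (∂_x^{s+1}β_l)(∂α_i/∂u^k_{(s)}) − (∂_x^{s+1}α_l)(∂β_i/∂u^k_{(s)}) ]. -/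

import Mathlib

open Finset

/-- An abstract model of the ring `𝒜` of differential polynomials in the formal
variables `u^i_{(s)}` (`i = 1,…,n`, `s ≥ 0`, `u^i_{(0)} = u^i`): a commutative
`ℝ`-algebra `A` equipped with the variables `u (i,s)`, the partial derivatives
`pd (i,s) = ∂/∂u^i_{(s)}` (commuting `ℝ`-linear derivations with
`∂u^j_{(t)}/∂u^i_{(s)} = δ`), a finiteness witness `supp f` (each `f` depends on
finitely many of the variables), and the total `x`-derivative
`∂_x f = Σ_{i,s} u^i_{(s+1)} ∂f/∂u^i_{(s)}` (a finite sum on each `f`). -/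
structure DiffPolyAlg (n : ℕ) (A : Type*) [CommRing A] [Algebra ℝ A] where
  u : Fin n × ℕ → A
  pd : Fin n × ℕ → A → A
  pd_add : ∀ v f g, pd v (f + g) = pd v f + pd v g
  pd_smul : ∀ v (r : ℝ) f, pd v (r • f) = r • pd v f
  pd_mul : ∀ v f g, pd v (f * g) = pd v f * g + f * pd v g
  pd_u : ∀ v w, pd v (u w) = if v = w then 1 else 0
  pd_comm : ∀ v w f, pd v (pd w f) = pd w (pd v f)
  supp : A → Finset (Fin n × ℕ)
  pd_eq_zero : ∀ f v, v ∉ supp f → pd v f = 0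
  Dx : A → A
  Dx_add : ∀ f g, Dx (f + g) = Dx f + Dx g
  Dx_smul : ∀ (r : ℝ) f, Dx (r • f) = r • Dx f
  Dx_mul : ∀ f g, Dx (f * g) = Dx f * g + f * Dx g
  Dx_spec : ∀ f, ∀ S : Finset (Fin n × ℕ), supp f ⊆ S →
      Dx f = ∑ v ∈ S, u (v.1, v.2 + 1) * pd v f

namespace DiffPolyAlg

variable {n : ℕ} {A : Type*} [CommRing A] [Algebra ℝ A]

/-- The finite set of orders `s` such that `∂f/∂u^i_{(s)}` can be nonzero;
sums `Σ_s` below are taken over this set. -/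
def sset (D : DiffPolyAlg n A) (f : A) (i : Fin n) : Finset ℕ :=
  ((D.supp f).filter fun v => v.1 = i).image Prod.snd

/-- The components `{α,β}_i = Σ_{k,l,s} η^{kl} [ (∂_x^{s+1}β_l)(∂α_i/∂u^k_{(s)})
− (∂_x^{s+1}α_l)(∂β_i/∂u^k_{(s)}) ]` of the Poisson bracket of two reduced
1-forms in flat coordinates (the sum over the pairs `(k,s)` is restricted to the
finite set where the partial derivatives can be nonzero). -/
def pbracket (D : DiffPolyAlg n A) (η : Fin n → Fin n → ℝ)
    (α β : Fin n → A) : Fin n → A := fun i =>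
  (∑ v ∈ D.supp (α i), ∑ l, η v.1 l • (D.Dx^[v.2 + 1] (β l) * D.pd v (α i)))
    - ∑ v ∈ D.supp (β i), ∑ l, η v.1 l • (D.Dx^[v.2 + 1] (α l) * D.pd v (β i))

end DiffPolyAlg

namespace DiffPolyAlg

variable {n : ℕ} {A : Type*} [CommRing A] [Algebra ℝ A]

/-- The Hamiltonian vector field `Pβ` in flat coordinates: `(Pβ)^k = η^{kl} ∂_x β_l`. -/
def flatP (D : DiffPolyAlg n A) (η : Fin n → Fin n → ℝ) (β : Fin n → A) :
    Fin n → A := fun k => ∑ l, η k l • D.Dx (β l)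

/-- The coefficient of `δu^i_{(t)}` in the (non-reduced) 1-form
`Lie_{Pβ}α − Lie_{Pα}β + δ⟨β, Pα⟩` in flat coordinates. -/
def rawBracketComp (D : DiffPolyAlg n A) (η : Fin n → Fin n → ℝ)
    (α β : Fin n → A) : Fin n → ℕ → A := fun i t =>
  (if t = 0 then
      (∑ v ∈ D.supp (α i), D.Dx^[v.2] (flatP D η β v.1) * D.pd v (α i))
        - ∑ v ∈ D.supp (β i), D.Dx^[v.2] (flatP D η α v.1) * D.pd v (β i)
    else 0)
    + (∑ k, α k * D.pd (i, t) (flatP D η β k))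
    - (∑ k, β k * D.pd (i, t) (flatP D η α k))
    + D.pd (i, t) (∑ l, β l * flatP D η α l)

/-- A finite set of orders `t` containing all those for which the coefficient of
`δu^i_{(t)}` in `Lie_{Pβ}α − Lie_{Pα}β + δ⟨β, Pα⟩` can be nonzero. -/
def rawBracketOrders (D : DiffPolyAlg n A) (η : Fin n → Fin n → ℝ)
    (α β : Fin n → A) (i : Fin n) : Finset ℕ :=
  insert 0
    ((Finset.univ.biUnion fun k =>
        D.sset (flatP D η β k) i ∪ D.sset (flatP D η α k) i)
      ∪ D.sset (∑ l, β l * flatP D η α l) i)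

/-- The reduced (integrated-by-parts) components
`R_i = Σ_t (−1)^t ∂_x^t (coefficient of δu^i_{(t)})` of the 1-form
`{α,β} = Lie_{Pβ}α − Lie_{Pα}β + δ⟨β, Pα⟩`; two 1-forms are equal modulo the
image of `d` precisely when their reduced components coincide. -/
def reducedRawBracket (D : DiffPolyAlg n A) (η : Fin n → Fin n → ℝ)
    (α β : Fin n → A) : Fin n → A := fun i =>
  ∑ t ∈ rawBracketOrders D η α β i,
    ((-1 : ℝ) ^ t) • D.Dx^[t] (rawBracketComp D η α β i t)

end DiffPolyAlg

/-!
Differentiating `∂_x f = Σ u^j_{(t+1)} ∂f/∂u^j_{(t)}` gives the commutation rule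
`∂/∂u^i_{(s)} ∘ ∂_x = ∂_x ∘ ∂/∂u^i_{(s)} + ∂/∂u^i_{(s-1)}`. Applied to `Pβ = η ∂_x β` and combined
with the Leibniz rule for `∂_x`, it turns the coefficient of `δu^i_{(t)}` in the raw bracket into
`{α,β}_i δ_{t0} + ∂_x H_t + H_{t-1}`, where `H_t = α_k η^{kl} ∂β_l/∂u^i_{(t)}`. In the reduced
form `Σ_t (-1)^t ∂_x^t (·)` the terms `∂_x H_t` and `H_t` cancel in pairs, and the sum telescopes
to `{α,β}_i` because `H_t` vanishes for large `t`.
-/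

namespace DiffPolyAlg

variable {n : ℕ} {A : Type*} [CommRing A] [Algebra ℝ A] (D : DiffPolyAlg n A)

def pdₗ (v : Fin n × ℕ) : A →ₗ[ℝ] A where
  toFun := D.pd v
  map_add' := D.pd_add v
  map_smul' := D.pd_smul v

def Dxₗ : A →ₗ[ℝ] A where
  toFun := D.Dx
  map_add' := D.Dx_add
  map_smul' := D.Dx_smul

lemma pd_sum (v : Fin n × ℕ) {ι : Type*} (s : Finset ι) (f : ι → A) :
    D.pd v (∑ x ∈ s, f x) = ∑ x ∈ s, D.pd v (f x) :=
  map_sum (D.pdₗ v) f s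

lemma Dx_sum {ι : Type*} (s : Finset ι) (f : ι → A) :
    D.Dx (∑ x ∈ s, f x) = ∑ x ∈ s, D.Dx (f x) :=
  map_sum D.Dxₗ f s

lemma coe_Dxₗ_pow (m : ℕ) : ⇑(D.Dxₗ ^ m) = D.Dx^[m] :=
  Module.End.coe_pow D.Dxₗ m

lemma iterate_Dx_zero (m : ℕ) : D.Dx^[m] (0 : A) = 0 := by
  rw [← coe_Dxₗ_pow, map_zero]

lemma iterate_Dx_add (m : ℕ) (f g : A) : D.Dx^[m] (f + g) = D.Dx^[m] f + D.Dx^[m] g := by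
  rw [← coe_Dxₗ_pow, map_add]

lemma iterate_Dx_smul (m : ℕ) (r : ℝ) (f : A) : D.Dx^[m] (r • f) = r • D.Dx^[m] f := by
  rw [← coe_Dxₗ_pow, map_smul]

lemma iterate_Dx_sum (m : ℕ) {ι : Type*} (s : Finset ι) (f : ι → A) :
    D.Dx^[m] (∑ x ∈ s, f x) = ∑ x ∈ s, D.Dx^[m] (f x) := by
  rw [← coe_Dxₗ_pow, map_sum]

lemma pd_eq_zero_of_notMem_sset {f : A} {i : Fin n} {t : ℕ} (ht : t ∉ D.sset f i) :
    D.pd (i, t) f = 0 :=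
  D.pd_eq_zero f (i, t) fun h => ht (mem_image.2 ⟨(i, t), mem_filter.2 ⟨h, rfl⟩, rfl⟩)

lemma eventually_pd_eq_zero (f : A) (i : Fin n) :
    ∀ᶠ t in Filter.atTop, D.pd (i, t) f = 0 := by
  refine Filter.eventually_atTop.2 ⟨(D.sset f i).sup id + 1, fun t ht => ?_⟩
  refine D.pd_eq_zero_of_notMem_sset fun hmem => ?_
  have : t ≤ (D.sset f i).sup id := le_sup (f := id) hmem
  omega

lemma pd_u_succ_mul_sum (f : A) (i : Fin n) (s : ℕ) {S : Finset (Fin n × ℕ)}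
    (hS : (i, s - 1) ∈ S) :
    ∑ v ∈ S, D.pd (i, s) (D.u (v.1, v.2 + 1)) * D.pd v f
      = if s = 0 then 0 else D.pd (i, s - 1) f := by
  simp_rw [D.pd_u]
  rcases s with _ | s
  · simp [Prod.ext_iff]
  · have hv : ∀ v : Fin n × ℕ, ((i, s + 1) = (v.1, v.2 + 1)) ↔ (i, s) = v := by
      simp [Prod.ext_iff]
    simp_rw [hv, ite_mul, one_mul, zero_mul, sum_ite_eq]
    simp_all

theorem pd_Dx (f : A) (i : Fin n) (s : ℕ) :
    D.pd (i, s) (D.Dx f)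
      = D.Dx (D.pd (i, s) f) + if s = 0 then 0 else D.pd (i, s - 1) f := by
  set S := insert (i, s - 1) (D.supp f ∪ D.supp (D.pd (i, s) f))
  have hf : D.supp f ⊆ S := fun v hv => by simp [S, hv]
  have hg : D.supp (D.pd (i, s) f) ⊆ S := fun v hv => by simp [S, hv]
  rw [D.Dx_spec f S hf, D.Dx_spec _ S hg, D.pd_sum,
    ← D.pd_u_succ_mul_sum f i s (mem_insert_self _ _), ← sum_add_distrib]
  refine sum_congr rfl fun v _ => ?_
  rw [D.pd_mul, D.pd_comm, add_comm]

variable (η : Fin n → Fin n → ℝ) (α β : Fin n → A)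

def pdPairing (i : Fin n) (t : ℕ) : A :=
  ∑ k, ∑ l, η k l • (α k * D.pd (i, t) (β l))

lemma iterate_Dx_flatP (m : ℕ) (k : Fin n) :
    D.Dx^[m] (flatP D η β k) = ∑ l, η k l • D.Dx^[m + 1] (β l) := by
  rw [flatP, iterate_Dx_sum]
  refine sum_congr rfl fun l _ => ?_
  rw [iterate_Dx_smul, Function.iterate_succ_apply]

lemma eventually_pdPairing_eq_zero (i : Fin n) :
    ∀ᶠ t in Filter.atTop, pdPairing D η α β i t = 0 := by
  filter_upwards [Filter.eventually_all.2 fun l => D.eventually_pd_eq_zero (β l) i] with t ht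
  simp [pdPairing, ht]

variable {η}

theorem sum_mul_pd_flatP_add (hη : ∀ k l, η k l = η l k) (i : Fin n) (s : ℕ) :
    (∑ k, α k * D.pd (i, s) (flatP D η β k))
        + (∑ l, ∑ m, η l m • (D.Dx (α m) * D.pd (i, s) (β l)))
      = D.Dx (pdPairing D η α β i s)
        + if s = 0 then 0 else pdPairing D η α β i (s - 1) := by
  set lower := fun l => if s = 0 then 0 else D.pd (i, s - 1) (β l)
  have hflat : ∀ k, α k * D.pd (i, s) (flatP D η β k)
      = ∑ l, (η k l • (α k * D.Dx (D.pd (i, s) (β l))) + η k l • (α k * lower l)) := by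
    intro k
    rw [flatP, D.pd_sum, mul_sum]
    refine sum_congr rfl fun l _ => ?_
    rw [D.pd_smul, D.pd_Dx, mul_smul_comm, mul_add, smul_add]
  have hleibniz : D.Dx (pdPairing D η α β i s)
      = ∑ k, ∑ l, (η k l • (D.Dx (α k) * D.pd (i, s) (β l))
          + η k l • (α k * D.Dx (D.pd (i, s) (β l)))) := by
    simp only [pdPairing, Dx_sum, D.Dx_smul, D.Dx_mul, smul_add]
  have hswap : (∑ l, ∑ m, η l m • (D.Dx (α m) * D.pd (i, s) (β l)))
      = ∑ k, ∑ l, η k l • (D.Dx (α k) * D.pd (i, s) (β l)) := by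
    rw [sum_comm]
    simp_rw [hη]
  have hlower : (if s = 0 then 0 else pdPairing D η α β i (s - 1))
      = ∑ k, ∑ l, η k l • (α k * lower l) := by
    by_cases hs : s = 0 <;> simp [lower, hs, pdPairing]
  rw [hleibniz, hswap, hlower]
  simp only [hflat, sum_add_distrib]
  abel

theorem rawBracketComp_eq (hη : ∀ k l, η k l = η l k) (i : Fin n) (t : ℕ) :
    rawBracketComp D η α β i t
      = (if t = 0 then D.pbracket η α β i else 0)
        + (D.Dx (pdPairing D η α β i t)
          + if t = 0 then 0 else pdPairing D η α β i (t - 1)) := by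
  have hpd : D.pd (i, t) (∑ l, β l * flatP D η α l)
      = (∑ l, ∑ m, η l m • (D.Dx (α m) * D.pd (i, t) (β l)))
        + ∑ l, β l * D.pd (i, t) (flatP D η α l) := by
    rw [D.pd_sum, ← sum_add_distrib]
    refine sum_congr rfl fun l _ => ?_
    rw [D.pd_mul, flatP, mul_sum]
    congr 1
    refine sum_congr rfl fun m _ => ?_
    rw [mul_smul_comm, mul_comm]
  have hpbracket : (∑ v ∈ D.supp (α i), D.Dx^[v.2] (flatP D η β v.1) * D.pd v (α i))
        - ∑ v ∈ D.supp (β i), D.Dx^[v.2] (flatP D η α v.1) * D.pd v (β i)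
      = D.pbracket η α β i := by
    simp only [pbracket, iterate_Dx_flatP, sum_mul, smul_mul_assoc]
  rw [← D.sum_mul_pd_flatP_add α β hη, rawBracketComp, hpd, hpbracket]
  abel

lemma rawBracketComp_eq_zero {i : Fin n} {t : ℕ} (ht : t ∉ rawBracketOrders D η α β i) :
    rawBracketComp D η α β i t = 0 := by
  simp only [rawBracketOrders, mem_insert, mem_union, mem_biUnion, mem_univ, true_and,
    not_or, not_exists] at ht
  obtain ⟨ht0, hflat, hpair⟩ := ht
  simp [rawBracketComp, ht0, D.pd_eq_zero_of_notMem_sset (hflat _).1,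
    D.pd_eq_zero_of_notMem_sset (hflat _).2, D.pd_eq_zero_of_notMem_sset hpair]

lemma sum_range_neg_one_pow_smul_iterate_Dx (h : ℕ → A) (N : ℕ) :
    ∑ t ∈ range (N + 1), (-1 : ℝ) ^ t • D.Dx^[t] (D.Dx (h t) + if t = 0 then 0 else h (t - 1))
      = (-1 : ℝ) ^ N • D.Dx^[N + 1] (h N) := by
  induction N with
  | zero => simp
  | succ N ih =>
    rw [sum_range_succ, ih, if_neg N.succ_ne_zero, N.add_sub_cancel, iterate_Dx_add,
      ← Function.iterate_succ_apply, pow_succ]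
    module

theorem reducedRawBracket_eq_pbracket (hη : ∀ k l, η k l = η l k) (i : Fin n) :
    reducedRawBracket D η α β i = D.pbracket η α β i := by
  set T := rawBracketOrders D η α β i
  obtain ⟨N, hN⟩ := Filter.eventually_atTop.1
    ((Filter.eventually_gt_atTop (T.sup id)).and (D.eventually_pdPairing_eq_zero η α β i))
  have hT : T ⊆ range (N + 1) := fun t ht =>
    mem_range.2 (Nat.lt_succ_of_le ((le_sup (f := id) ht).trans (hN N le_rfl).1.le))
  have hsplit : ∀ t, (-1 : ℝ) ^ t • D.Dx^[t] (rawBracketComp D η α β i t)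
      = (if t = 0 then D.pbracket η α β i else 0)
        + (-1 : ℝ) ^ t • D.Dx^[t] (D.Dx (pdPairing D η α β i t)
          + if t = 0 then 0 else pdPairing D η α β i (t - 1)) := by
    intro t
    rw [D.rawBracketComp_eq α β hη, iterate_Dx_add, smul_add]
    by_cases ht : t = 0 <;> simp [ht, iterate_Dx_zero]
  rw [reducedRawBracket, sum_subset hT fun t _ ht => by
      rw [D.rawBracketComp_eq_zero α β ht, iterate_Dx_zero, smul_zero],
    sum_congr rfl fun t _ => hsplit t, sum_add_distrib, sum_ite_eq', if_pos (by simp),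
    sum_range_neg_one_pow_smul_iterate_Dx, (hN N le_rfl).2, iterate_Dx_zero, smul_zero,
    add_zero]

end DiffPolyAlg

theorem flat_bracket_reduced_general {n : ℕ} {A : Type*} [CommRing A]
    [Algebra ℝ A] (D : DiffPolyAlg n A)
    (η : Fin n → Fin n → ℝ) (hη_symm : ∀ k l, η k l = η l k)
    (α β : Fin n → A) :
    (∀ (i : Fin n) (s : ℕ),
        (∑ k, α k * D.pd (i, s) (DiffPolyAlg.flatP D η β k))
            + (∑ l, ∑ m, η l m • (D.Dx (α m) * D.pd (i, s) (β l)))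
          = D.Dx (∑ k, ∑ l, η k l • (α k * D.pd (i, s) (β l)))
            + (if s = 0 then 0
                else ∑ k, ∑ l, η k l • (α k * D.pd (i, s - 1) (β l)))) ∧
      (∀ i : Fin n,
        DiffPolyAlg.reducedRawBracket D η α β i = D.pbracket η α β i) :=
  ⟨D.sum_mul_pd_flatP_add α β hη_symm, D.reducedRawBracket_eq_pbracket α β hη_symm⟩

/-- For all `α, β ∈ 𝒜ⁿ`, every `i` and every `s ≥ 0` one has
(sums over `k, l, m`):
`α_k (∂/∂u^i_{(s)})(η^{kl} ∂_x β_l) + η^{lm}(∂_x α_m)(∂β_l/∂u^i_{(s)})`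
`= ∂_x( α_k η^{kl} ∂β_l/∂u^i_{(s)} ) + α_k η^{kl} ∂β_l/∂u^i_{(s−1)}`,
where the last term is absent for `s = 0`.  Consequently, in flat coordinates
the bracket `{α,β} := Lie_{Pβ}α − Lie_{Pα}β + δ⟨β, Pα⟩` is, as a 1-form on the
formal loop space (i.e. modulo the image of `d`), the reduced 1-form with
components
`{α,β}_i = Σ_{k,l,s} η^{kl}[ (∂_x^{s+1}β_l)(∂α_i/∂u^k_{(s)}) − (∂_x^{s+1}α_l)(∂β_i/∂u^k_{(s)}) ]`. -/
theorem flat_bracket_reduced {n : ℕ} (hn : 1 ≤ n) {A : Type*} [CommRing A]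
    [Algebra ℝ A] (D : DiffPolyAlg n A)
    (η : Fin n → Fin n → ℝ) (hη_symm : ∀ k l, η k l = η l k)
    (η' : Fin n → Fin n → ℝ)
    (hη_nondeg : ∀ i j, ∑ k, η i k * η' k j = if i = j then (1 : ℝ) else 0)
    (α β : Fin n → A) :
    (∀ (i : Fin n) (s : ℕ),
        (∑ k, α k * D.pd (i, s) (DiffPolyAlg.flatP D η β k))
            + (∑ l, ∑ m, η l m • (D.Dx (α m) * D.pd (i, s) (β l)))
          = D.Dx (∑ k, ∑ l, η k l • (α k * D.pd (i, s) (β l)))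
            + (if s = 0 then 0
                else ∑ k, ∑ l, η k l • (α k * D.pd (i, s - 1) (β l)))) ∧
      (∀ i : Fin n,
        DiffPolyAlg.reducedRawBracket D η α β i = D.pbracket η α β i) :=
  flat_bracket_reduced_general D η hη_symm α β
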